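/- Let γ ≥ 0. Let X ∈ C⁴([0,1];ℝ²) be inextensible (|X'(s)| = 1 for all s), let ζ ∈ C³([0,1];ℝ), let λ ∈ C¹([0,1];ℝ), and let e_n(s) denote the rotation of X'(s) by angle π/2. Set W := X''' − λX' − (ζe_n)', and suppose W(0) = W(1) = 0. Then ∫₀¹ −(W'(s) + γ(X'(s)·W'(s))X'(s)) ds = −γ ∫₀¹ (X'(s)·(X'' − ζe_n)''(s) − λ'(s)) X'(s) ds. -/

import Mathlib

open MeasureTheory Set
open scoped RealInnerProductSpace

noncomputable section

abbrev E2 : Type := EuclideanSpace ℝ (Fin 2)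

/-- Rotation of a planar vector by the angle `π/2`. -/
def rot (v : E2) : E2 := (EuclideanSpace.equiv (Fin 2) ℝ).symm ![-(v 1), v 0]

/-- `rot` as a continuous linear map. -/
def rotCLM : E2 →L[ℝ] E2 := LinearMap.toContinuousLinearMap
  { toFun := rot
    map_add' := by intro a b; ext i; fin_cases i <;> simp [rot] <;> ring
    map_smul' := by intro c a; ext i; fin_cases i <;> simp [rot] <;> ring }

lemma rot_eq_clm : rot = fun v => rotCLM v := rfl

/-- the center-of-mass velocity of a force-free planar filament
with preferred curvature is proportional to the drag anisotropy `γ`. -/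
theorem swimming_velocity_identity (γ : ℝ) (hγ : 0 ≤ γ)
    (X : ℝ → E2) (ζ lam : ℝ → ℝ)
    (hX : ContDiff ℝ 4 X) (hζ : ContDiff ℝ 3 ζ) (hlam : ContDiff ℝ 1 lam)
    (hinext : ∀ s ∈ Icc (0:ℝ) 1, ‖deriv X s‖ = 1)
    (W : ℝ → E2)
    (hW : ∀ s, W s = iteratedDeriv 3 X s - lam s • deriv X s
        - deriv (fun u => ζ u • rot (deriv X u)) s)
    (hW0 : W 0 = 0) (hW1 : W 1 = 0) :
    (∫ s in (0:ℝ)..1, -(deriv W s + (γ * ⟪deriv X s, deriv W s⟫) • deriv X s)) =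
      -γ • ∫ s in (0:ℝ)..1,
        ((⟪deriv X s,
            iteratedDeriv 2 (fun u => iteratedDeriv 2 X u - ζ u • rot (deriv X u)) s⟫)
          - deriv lam s) • deriv X s := by
  -- smoothness ladder for X
  have h1 : ContDiff ℝ 3 (deriv X) :=
    (contDiff_succ_iff_deriv.mp (show ContDiff ℝ (3+1) X by norm_num; exact hX)).2.2
  have e2 : iteratedDeriv 2 X = deriv (deriv X) := by
    rw [iteratedDeriv_succ, iteratedDeriv_one]
  have e3 : iteratedDeriv 3 X = deriv (iteratedDeriv 2 X) := iteratedDeriv_succ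
  have e4 : iteratedDeriv 4 X = deriv (iteratedDeriv 3 X) := iteratedDeriv_succ
  have h2 : ContDiff ℝ 2 (iteratedDeriv 2 X) := by
    rw [e2]
    exact (contDiff_succ_iff_deriv.mp
      (show ContDiff ℝ (2+1) (deriv X) by norm_num; exact h1)).2.2
  have h3 : ContDiff ℝ 1 (iteratedDeriv 3 X) := by
    rw [e3]
    exact (contDiff_succ_iff_deriv.mp
      (show ContDiff ℝ (1+1) (iteratedDeriv 2 X) by norm_num; exact h2)).2.2
  -- the preferred-curvature term g
  set g : ℝ → E2 := fun u => ζ u • rot (deriv X u) with hgdef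
  have hg : ContDiff ℝ 3 g := by
    rw [hgdef, rot_eq_clm]
    exact hζ.smul (rotCLM.contDiff.comp h1)
  have hdg : ContDiff ℝ 2 (deriv g) :=
    (contDiff_succ_iff_deriv.mp (show ContDiff ℝ (2+1) g by norm_num; exact hg)).2.2
  have hddg : ContDiff ℝ 1 (deriv (deriv g)) :=
    (contDiff_succ_iff_deriv.mp (show ContDiff ℝ (1+1) (deriv g) by norm_num; exact hdg)).2.2
  -- W as a function
  have hWfun : W = fun u => iteratedDeriv 3 X u - lam u • deriv X u - deriv g u := funext hW
  have hWc : ContDiff ℝ 1 W := by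
    rw [hWfun]
    exact (h3.sub (hlam.smul (h1.of_le (by norm_num)))).sub (hdg.of_le (by norm_num))
  -- derivative of deriv X
  have hDX : ∀ s, HasDerivAt (deriv X) (iteratedDeriv 2 X s) s := by
    intro s
    rw [e2]
    exact ((h1.differentiable (by norm_num)) s).hasDerivAt
  -- derivative of W
  have derivW : ∀ s, deriv W s
      = iteratedDeriv 4 X s - (lam s • iteratedDeriv 2 X s + deriv lam s • deriv X s)
        - deriv (deriv g) s := by
    intro s
    have hA : HasDerivAt (iteratedDeriv 3 X) (iteratedDeriv 4 X s) s := by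
      rw [e4]
      exact ((h3.differentiable (by norm_num)) s).hasDerivAt
    have hB : HasDerivAt (fun u => lam u • deriv X u)
        (lam s • iteratedDeriv 2 X s + deriv lam s • deriv X s) s :=
      (((hlam.differentiable (by norm_num)) s).hasDerivAt).smul (hDX s)
    have hC : HasDerivAt (deriv g) (deriv (deriv g) s) s :=
      ((hdg.differentiable (by norm_num)) s).hasDerivAt
    rw [hWfun]
    exact ((hA.sub hB).sub hC).deriv
  -- second iterated derivative of F = X'' - g
  have eF : iteratedDeriv 2 (fun u => iteratedDeriv 2 X u - ζ u • rot (deriv X u))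
      = fun s => iteratedDeriv 4 X s - deriv (deriv g) s := by
    have hF0 : (fun u => iteratedDeriv 2 X u - ζ u • rot (deriv X u))
        = fun u => iteratedDeriv 2 X u - g u := rfl
    have hF1 : deriv (fun u => iteratedDeriv 2 X u - g u)
        = fun u => iteratedDeriv 3 X u - deriv g u := by
      funext u
      rw [deriv_fun_sub ((h2.differentiable (by norm_num)) u) ((hg.differentiable (by norm_num)) u),
        e3]
    rw [hF0, iteratedDeriv_succ, iteratedDeriv_one, hF1]
    funext u
    rw [deriv_fun_sub ((h3.differentiable (by norm_num)) u) ((hdg.differentiable (by norm_num)) u), e4]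
  -- inner product identities on the interior
  have hXX : ∀ s ∈ Ioo (0:ℝ) 1, ⟪deriv X s, iteratedDeriv 2 X s⟫ = 0 := by
    intro s hs
    have hone : (fun u => (⟪deriv X u, deriv X u⟫ : ℝ)) =ᶠ[nhds s] fun _ => 1 := by
      filter_upwards [Ioo_mem_nhds hs.1 hs.2] with u hu
      have h := hinext u (Ioo_subset_Icc_self hu)
      rw [real_inner_self_eq_norm_sq, h]; norm_num
    have hd1 : HasDerivAt (fun u => (⟪deriv X u, deriv X u⟫ : ℝ))
        (⟪deriv X s, iteratedDeriv 2 X s⟫ + ⟪iteratedDeriv 2 X s, deriv X s⟫) s :=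
      HasDerivAt.inner ℝ (hDX s) (hDX s)
    have hd2 : HasDerivAt (fun u => (⟪deriv X u, deriv X u⟫ : ℝ)) 0 s :=
      (hasDerivAt_const s (1:ℝ)).congr_of_eventuallyEq hone
    have h0 := hd1.unique hd2
    have hcomm : ⟪iteratedDeriv 2 X s, deriv X s⟫ = ⟪deriv X s, iteratedDeriv 2 X s⟫ :=
      real_inner_comm _ _
    rw [hcomm] at h0
    linarith
  have hXone : ∀ s ∈ Ioo (0:ℝ) 1, ⟪deriv X s, deriv X s⟫ = 1 := by
    intro s hs
    rw [real_inner_self_eq_norm_sq, hinext s (Ioo_subset_Icc_self hs)]; norm_num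
  -- pointwise key identity on the interior
  have key : ∀ s ∈ Ioo (0:ℝ) 1,
      (⟪deriv X s, deriv W s⟫ : ℝ)
        = ⟪deriv X s,
            iteratedDeriv 2 (fun u => iteratedDeriv 2 X u - ζ u • rot (deriv X u)) s⟫
          - deriv lam s := by
    intro s hs
    rw [derivW s, eF]
    rw [inner_sub_right, inner_sub_right, inner_add_right, real_inner_smul_right,
      real_inner_smul_right, hXX s hs, hXone s hs]
    simp only [inner_sub_right]
    ring
  -- continuity / integrability
  have hcW' : Continuous (deriv W) :=
    ((contDiff_succ_iff_deriv.mp (show ContDiff ℝ (0+1) W by norm_num; exact hWc)).2.2).continuous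
  have hcX1 : Continuous (deriv X) := h1.continuous
  have hi1 : IntervalIntegrable (deriv W) volume 0 1 := hcW'.intervalIntegrable _ _
  have hi2 : IntervalIntegrable
      (fun s => (γ * ⟪deriv X s, deriv W s⟫) • deriv X s) volume 0 1 :=
    ((continuous_const.fun_mul (hcX1.inner hcW')).fun_smul hcX1).intervalIntegrable _ _
  -- compute the integral of deriv W
  have hItW : (∫ s in (0:ℝ)..1, deriv W s) = 0 := by
    rw [intervalIntegral.integral_deriv_eq_sub
      (fun x _ => (hWc.differentiable (by norm_num)) x) hi1, hW1, hW0, sub_zero]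
  -- main computation
  have hsplit : (∫ s in (0:ℝ)..1, -(deriv W s + (γ * ⟪deriv X s, deriv W s⟫) • deriv X s))
      = -((∫ s in (0:ℝ)..1, deriv W s)
          + ∫ s in (0:ℝ)..1, (γ * ⟪deriv X s, deriv W s⟫) • deriv X s) := by
    rw [intervalIntegral.integral_neg, intervalIntegral.integral_add hi1 hi2]
  rw [hsplit, hItW, zero_add]
  have hmul : (fun s => (γ * ⟪deriv X s, deriv W s⟫) • deriv X s)
      = fun s => γ • ((⟪deriv X s, deriv W s⟫ : ℝ) • deriv X s) := by
    funext s; rw [mul_smul]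
  rw [hmul, intervalIntegral.integral_smul]
  have hcongr : (∫ s in (0:ℝ)..1, (⟪deriv X s, deriv W s⟫ : ℝ) • deriv X s)
      = ∫ s in (0:ℝ)..1,
          ((⟪deriv X s,
              iteratedDeriv 2 (fun u => iteratedDeriv 2 X u - ζ u • rot (deriv X u)) s⟫)
            - deriv lam s) • deriv X s := by
    apply intervalIntegral.integral_congr_ae
    have hne : ∀ᵐ x : ℝ ∂(volume : Measure ℝ), x ≠ 1 := by
      rw [ae_iff]
      simpa using measure_singleton (1:ℝ)
    filter_upwards [hne] with x hx hxI
    have hxoc : x ∈ Ioc (0:ℝ) 1 := by simpa [uIoc_of_le] using hxI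
    have hxo : x ∈ Ioo (0:ℝ) 1 := ⟨hxoc.1, lt_of_le_of_ne hxoc.2 hx⟩
    rw [key x hxo]
  rw [hcongr, neg_smul]
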